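/- Let G ~ G(n, p_n) and assume n·p_n ≤ log²(n). Then with high probability, at most log^{15}(n) vertices of G have a 2-neighborhood that is not a tree. -/

import Mathlib

open MeasureTheory Filter Asymptotics
open scoped NNReal ENNReal

/-- The Erdős–Rényi measure on edge-indicator functions: each potential edge (element of
`Sym2 (Fin n)`) is present independently with probability `p` (capped at 1). -/
noncomputable def erMeasure (n : ℕ) (p : ℝ≥0) : Measure (Sym2 (Fin n) → Bool) :=
  Measure.pi fun _ => (PMF.bernoulli (min p 1) (min_le_right _ _)).toMeasure

/-- The simple graph on `Fin n` determined by an edge-indicator function. -/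
def graphOfFn {n : ℕ} (ω : Sym2 (Fin n) → Bool) : SimpleGraph (Fin n) where
  Adj u v := u ≠ v ∧ ω s(u, v) = true
  symm := ⟨fun u v h => ⟨h.1.symm, by rw [Sym2.eq_swap]; exact h.2⟩⟩
  loopless := ⟨fun u h => h.1 rfl⟩

/-- The set of vertices at graph distance at most `r` from `v`. -/
def ball {V : Type*} (G : SimpleGraph V) (v : V) (r : ℕ) : Set V :=
  {w | ∃ p : G.Walk v w, p.length ≤ r}

/-- There is a graph isomorphism between the `r`-neighborhoods of `u` and of `v`
(induced subgraphs on the balls of radius `r`) mapping `u` to `v`. -/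
def RootedIso {V : Type*} (G : SimpleGraph V) (r : ℕ) (u v : V) : Prop :=
  ∃ φ : G.induce (ball G u r) ≃g G.induce (ball G v r),
    (φ ⟨u, ⟨SimpleGraph.Walk.nil, Nat.zero_le r⟩⟩ : V) = v

/-- The degree of a vertex. -/
noncomputable def deg {V : Type*} (G : SimpleGraph V) (v : V) : ℕ := (G.neighborSet v).ncard

/-!
A 2-neighbourhood of `v` that is not a tree contains a cycle. At a vertex `z` of the cycle farthest
from `v`, the two cycle-neighbours of `z` either give an edge whose endpoints are equally far from
`v`, or two distinct common neighbours of `v` and `z`. Either way `v` is the root of one of four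
small patterns (a triangle, a triangle with a pendant edge, a 4-cycle, a 5-cycle), each having one
more edge than non-root vertices. Counting rooted copies, a pattern with `k` non-root vertices
occurs at `v` with probability at most `n ^ k * p ^ (k + 1)`, so the expected number of bad
vertices is `O((n p) ^ 5) = O(log ^ 10 n)`, and Markov's inequality concludes.
-/

section RootedPatterns

variable {V : Type*} {G : SimpleGraph V}

lemma self_mem_ball (G : SimpleGraph V) (v : V) (r : ℕ) : v ∈ ball G v r :=
  ⟨.nil, Nat.zero_le r⟩

lemma connected_induce_ball (G : SimpleGraph V) (v : V) (r : ℕ) :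
    (G.induce (ball G v r)).Connected := by
  classical
  refine G.induce_connected_of_patches v (self_mem_ball G v r) fun {_} ⟨p, hp⟩ =>
    ⟨{x | x ∈ p.support}, fun _ hx => ⟨p.takeUntil _ hx, ?_⟩, p.start_mem_support,
      p.end_mem_support, p.connected_induce_support.preconnected _ _⟩
  exact (p.length_takeUntil_le_length hx).trans hp

lemma exists_isCycle_of_not_isAcyclic_induce {s : Set V} (h : ¬ (G.induce s).IsAcyclic) :
    ∃ (u : V) (c : G.Walk u u), c.IsCycle ∧ ∀ w ∈ c.support, w ∈ s := by
  simp only [SimpleGraph.IsAcyclic, not_forall, not_not] at h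
  obtain ⟨u, c, hc⟩ := h
  have hinj := (SimpleGraph.Embedding.induce (G := G) s).injective
  refine ⟨u, c.map (SimpleGraph.Embedding.induce s).toHom,
    (SimpleGraph.Walk.isCycle_map_iff_of_injective hinj).2 hc, fun w hw => ?_⟩
  obtain ⟨w, -, rfl⟩ := List.mem_map.1 (SimpleGraph.Walk.support_map _ c ▸ hw)
  exact w.2

lemma SimpleGraph.Walk.IsCycle.exists_adj_adj {u z : V} {c : G.Walk u u} (hc : c.IsCycle)
    (hz : z ∈ c.support) :
    ∃ x y, x ≠ y ∧ G.Adj z x ∧ G.Adj z y ∧ x ∈ c.support ∧ y ∈ c.support := by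
  classical
  have hc' := hc.rotate hz
  refine ⟨(c.rotate z hz).snd, (c.rotate z hz).penultimate, hc'.snd_ne_penultimate,
    adj_snd hc'.not_nil, (adj_penultimate hc'.not_nil).symm, ?_, ?_⟩
  · exact (mem_support_rotate_iff ..).1 (getVert_mem_support ..)
  · exact (mem_support_rotate_iff ..).1 (getVert_mem_support ..)

lemma SimpleGraph.exists_adj_adj_of_dist_eq_two {u v : V} (h : G.dist u v = 2) :
    ∃ w, G.Adj u w ∧ G.Adj w v := by
  have hr : G.Reachable u v := .of_dist_ne_zero (by omega)
  have hedist : G.edist u v = 2 := by rw [← hr.coe_dist_eq_edist, h]; rfl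
  obtain ⟨w, hw⟩ := (SimpleGraph.edist_eq_two_iff.1 hedist).2.2
  obtain ⟨huw, hvw⟩ := G.mem_commonNeighbors.1 hw
  exact ⟨w, huw, hvw.symm⟩

/-- Vertex `0` of a pattern is its root. -/
def HasRootedCopy (G : SimpleGraph V) (v : V) {k : ℕ} (E : Finset (Sym2 (Fin (k + 1)))) : Prop :=
  ∃ f : Fin (k + 1) → V, Function.Injective f ∧ f 0 = v ∧ ∀ e ∈ E, e.map f ∈ G.edgeSet

def triangleEdges : Finset (Sym2 (Fin 3)) := {s(0, 1), s(0, 2), s(1, 2)}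

def pendantTriangleEdges : Finset (Sym2 (Fin 4)) := {s(0, 1), s(1, 2), s(1, 3), s(2, 3)}

def squareEdges : Finset (Sym2 (Fin 4)) := {s(0, 1), s(0, 2), s(1, 3), s(2, 3)}

def pentagonEdges : Finset (Sym2 (Fin 5)) := {s(0, 1), s(0, 2), s(1, 3), s(2, 4), s(3, 4)}

lemma hasRootedCopy_of_adj_of_dist_eq {v a b : V} (hab : G.Adj a b) (ha : G.Reachable v a)
    (hd : G.dist v a = G.dist v b) (hle : G.dist v a ≤ 2) :
    HasRootedCopy G v triangleEdges ∨ HasRootedCopy G v pendantTriangleEdges ∨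
      HasRootedCopy G v pentagonEdges := by
  have hb : G.Reachable v b := ha.trans hab.reachable
  obtain hd0 | hd1 | hd2 : G.dist v a = 0 ∨ G.dist v a = 1 ∨ G.dist v a = 2 := by omega
  · have hva : v = a := ha.dist_eq_zero_iff.1 hd0
    have hvb : v = b := hb.dist_eq_zero_iff.1 (hd ▸ hd0)
    exact absurd (hva.symm.trans hvb) hab.ne
  · have hva : G.Adj v a := G.dist_eq_one_iff_adj.1 hd1
    have hvb : G.Adj v b := G.dist_eq_one_iff_adj.1 (hd ▸ hd1)
    refine .inl ⟨![v, a, b], List.nodup_ofFn.1 ?_, rfl, by simp [triangleEdges, hva, hvb, hab]⟩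
    simp [hva.ne, hvb.ne, hab.ne]
  · obtain ⟨c, hvc, hca⟩ := G.exists_adj_adj_of_dist_eq_two hd2
    obtain ⟨d, hvd, hdb⟩ := G.exists_adj_adj_of_dist_eq_two (hd ▸ hd2)
    have hc1 := G.dist_eq_one_iff_adj.2 hvc
    have hd1 := G.dist_eq_one_iff_adj.2 hvd
    have hva : v ≠ a := by rintro rfl; simp at hd2
    have hvb : v ≠ b := by rintro rfl; rw [G.dist_self] at hd; omega
    have hcb : c ≠ b := by rintro rfl; omega
    have hda : d ≠ a := by rintro rfl; omega
    by_cases hcd : c = d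
    · subst hcd
      refine .inr (.inl ⟨![v, c, a, b], List.nodup_ofFn.1 ?_, rfl,
        by simp [pendantTriangleEdges, hvc, hca, hdb, hab]⟩)
      simp [hvc.ne, hva, hvb, hca.ne, hcb, hab.ne]
    · refine .inr (.inr ⟨![v, c, d, a, b], List.nodup_ofFn.1 ?_, rfl,
        by simp [pentagonEdges, hvc, hvd, hca, hdb, hab]⟩)
      simp [hvc.ne, hvd.ne, hva, hvb, hcd, hca.ne, hcb, hda, hdb.ne, hab.ne]

lemma hasRootedCopy_squareEdges {v x y z : V} (hxy : x ≠ y) (hzx : G.Adj z x) (hzy : G.Adj z y)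
    (hx : G.dist v x = 1) (hy : G.dist v y = 1) (hz : G.dist v z = 2) :
    HasRootedCopy G v squareEdges := by
  rw [G.dist_eq_one_iff_adj] at hx hy
  have hvz : v ≠ z := by rintro rfl; simp at hz
  refine ⟨![v, x, y, z], List.nodup_ofFn.1 ?_, rfl,
    by simp [squareEdges, hx, hy, hzx.symm, hzy.symm]⟩
  simp [hx.ne, hy.ne, hvz, hxy, hzx.ne.symm, hzy.ne.symm]

theorem hasRootedCopy_of_not_isTree_induce_ball {v : V}
    (h : ¬ (G.induce (ball G v 2)).IsTree) :
    HasRootedCopy G v triangleEdges ∨ HasRootedCopy G v pendantTriangleEdges ∨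
      HasRootedCopy G v squareEdges ∨ HasRootedCopy G v pentagonEdges := by
  classical
  obtain ⟨u, c, hc, hball⟩ :=
    exists_isCycle_of_not_isAcyclic_induce fun hac => h ⟨connected_induce_ball G v 2, hac⟩
  have hnear : ∀ w ∈ c.support, G.Reachable v w ∧ G.dist v w ≤ 2 := fun w hw => by
    obtain ⟨p, hp⟩ := hball w hw
    exact ⟨⟨p⟩, (G.dist_le p).trans hp⟩
  obtain ⟨z, hz, hzmax⟩ := c.support.toFinset.exists_max_image (G.dist v) ⟨u, by simp⟩
  rw [List.mem_toFinset] at hz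
  obtain ⟨x, y, hxy, hzx, hzy, hx, hy⟩ := hc.exists_adj_adj hz
  have hxz := hzmax x (List.mem_toFinset.2 hx)
  have hyz := hzmax y (List.mem_toFinset.2 hy)
  have hzx' : G.dist v z ≤ G.dist v x + 1 := by
    simpa [G.dist_eq_one_iff_adj.2 hzx.symm] using (hnear x hx).1.dist_triangle_left z
  have hzy' : G.dist v z ≤ G.dist v y + 1 := by
    simpa [G.dist_eq_one_iff_adj.2 hzy.symm] using (hnear y hy).1.dist_triangle_left z
  by_cases hflat : G.dist v z = G.dist v x ∨ G.dist v z = G.dist v y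
  · obtain hflat | hflat := hflat
    · have := hasRootedCopy_of_adj_of_dist_eq hzx (hnear z hz).1 hflat (hnear z hz).2
      tauto
    · have := hasRootedCopy_of_adj_of_dist_eq hzy (hnear z hz).1 hflat (hnear z hz).2
      tauto
  -- no flat edge at `z`: both cycle-neighbours of `z` are one step closer to `v`, hence not `v`
  have hx1 : G.dist v x ≠ 0 := fun hx0 => by
    have hy0 : G.dist v y = 0 := by omega
    exact hxy (((hnear x hx).1.dist_eq_zero_iff.1 hx0).symm.trans
      ((hnear y hy).1.dist_eq_zero_iff.1 hy0))
  have hz2 := (hnear z hz).2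
  exact .inr (.inr (.inl (hasRootedCopy_squareEdges hxy hzx hzy (by omega) (by omega) (by omega))))

end RootedPatterns

section ErdosRenyi

lemma apply_eq_true_of_mem_edgeSet_graphOfFn {n : ℕ} {ω : Sym2 (Fin n) → Bool}
    {e : Sym2 (Fin n)} (he : e ∈ (graphOfFn ω).edgeSet) : ω e = true := by
  induction e using Sym2.ind with
  | h a b => exact he.2

instance (n : ℕ) (p : ℝ≥0) : IsProbabilityMeasure (erMeasure n p) := by
  unfold erMeasure; infer_instance

lemma erMeasure_forall_mem_eq (n : ℕ) (p : ℝ≥0) (F : Finset (Sym2 (Fin n))) :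
    erMeasure n p {ω | ∀ e ∈ F, ω e = true} = min (p : ℝ≥0∞) 1 ^ F.card := by
  have hpi : {ω : Sym2 (Fin n) → Bool | ∀ e ∈ F, ω e = true} =
      (F : Set _).pi fun _ => {true} := by
    ext; simp [Set.mem_pi]
  rw [hpi, erMeasure, Measure.pi_pi_finset]
  simp [PMF.bernoulli_apply]

theorem erMeasure_hasRootedCopy_le (n k : ℕ) (p : ℝ≥0) (v : Fin n)
    (E : Finset (Sym2 (Fin (k + 1)))) :
    erMeasure n p {ω | HasRootedCopy (graphOfFn ω) v E} ≤ n ^ k * p ^ E.card := by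
  classical
  let Placement :=
    {g : Fin k → Fin n // Function.Injective (Fin.cons v g : Fin (k + 1) → Fin n)}
  -- a rooted copy is determined by the images of the `k` non-root vertices
  let present (g : Placement) : Set (Sym2 (Fin n) → Bool) :=
    {ω | ∀ e ∈ E.image (Sym2.map (Fin.cons v g.1 : Fin (k + 1) → Fin n)), ω e = true}
  have hsub : {ω | HasRootedCopy (graphOfFn ω) v E} ⊆ ⋃ g, present g := by
    rintro ω ⟨f, hf, rfl, hE⟩
    refine Set.mem_iUnion.2 ⟨⟨Fin.tail f, by rwa [Fin.cons_self_tail]⟩, ?_⟩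
    simp only [present, Set.mem_ofPred_eq, Finset.forall_mem_image, Fin.cons_self_tail]
    exact fun e he => apply_eq_true_of_mem_edgeSet_graphOfFn (hE e he)
  have hcard : (Fintype.card Placement : ℝ≥0∞) ≤ n ^ k := by
    exact_mod_cast (Fintype.card_subtype_le _).trans_eq (by simp)
  calc erMeasure n p {ω | HasRootedCopy (graphOfFn ω) v E}
      ≤ ∑ g, erMeasure n p (present g) :=
        (measure_mono hsub).trans (measure_iUnion_fintype_le _ _)
    _ ≤ ∑ _ : Placement, (p : ℝ≥0∞) ^ E.card := Finset.sum_le_sum fun g _ => by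
      rw [erMeasure_forall_mem_eq, Finset.card_image_of_injective _ (Sym2.map.injective g.2)]
      exact pow_le_pow_left' (min_le_left _ _) _
    _ ≤ n ^ k * p ^ E.card := by
      rw [Finset.sum_const, Finset.card_univ, nsmul_eq_mul]
      gcongr

theorem erMeasure_not_isTree_induce_ball_le (n : ℕ) (p : ℝ≥0) (v : Fin n) :
    erMeasure n p {ω | ¬ ((graphOfFn ω).induce (ball (graphOfFn ω) v 2)).IsTree}
      ≤ n ^ 2 * p ^ 3 + 2 * (n ^ 3 * p ^ 4) + n ^ 4 * p ^ 5 := by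
  let μ := erMeasure n p
  calc μ {ω | ¬ ((graphOfFn ω).induce (ball (graphOfFn ω) v 2)).IsTree}
      ≤ μ ({ω | HasRootedCopy (graphOfFn ω) v triangleEdges} ∪
          ({ω | HasRootedCopy (graphOfFn ω) v pendantTriangleEdges} ∪
          ({ω | HasRootedCopy (graphOfFn ω) v squareEdges} ∪
            {ω | HasRootedCopy (graphOfFn ω) v pentagonEdges}))) :=
        measure_mono fun _ => hasRootedCopy_of_not_isTree_induce_ball
    _ ≤ μ {ω | HasRootedCopy (graphOfFn ω) v triangleEdges} +
          (μ {ω | HasRootedCopy (graphOfFn ω) v pendantTriangleEdges} +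
          (μ {ω | HasRootedCopy (graphOfFn ω) v squareEdges} +
            μ {ω | HasRootedCopy (graphOfFn ω) v pentagonEdges})) :=
        (measure_union_le _ _).trans (add_le_add le_rfl ((measure_union_le _ _).trans
          (add_le_add le_rfl (measure_union_le _ _))))
    _ ≤ n ^ 2 * p ^ 3 + (n ^ 3 * p ^ 4 + (n ^ 3 * p ^ 4 + n ^ 4 * p ^ 5)) := by
      gcongr <;> apply erMeasure_hasRootedCopy_le
    _ = n ^ 2 * p ^ 3 + 2 * (n ^ 3 * p ^ 4) + n ^ 4 * p ^ 5 := by ring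

end ErdosRenyi

section FirstMoment

variable {Ω : Type*} [MeasurableSpace Ω] {μ : Measure Ω}

lemma lintegral_ncard_setOf_eq_sum {ι : Type*} [Fintype ι] (P : ι → Ω → Prop)
    (hP : ∀ i, MeasurableSet {ω | P i ω}) :
    ∫⁻ ω, ({i | P i ω}.ncard : ℝ≥0∞) ∂μ = ∑ i, μ {ω | P i ω} := by
  classical
  have hsum : ∀ ω, ({i | P i ω}.ncard : ℝ≥0∞) = ∑ i, {ω | P i ω}.indicator 1 ω := by
    intro ω
    rw [Set.ncard_eq_toFinset_card', Set.toFinset_ofPred, Finset.card_filter]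
    simp [Set.indicator_apply]
  simp_rw [hsum]
  rw [lintegral_finsetSum _ fun i _ => measurable_one.indicator (hP i)]
  simp_rw [lintegral_indicator_one (hP _)]

lemma one_sub_ofReal_div_le_measure_le [IsProbabilityMeasure μ] {X : Ω → ℕ}
    (hX : Measurable X) {a c : ℝ} (ha : 0 < a)
    (hc : ∫⁻ ω, (X ω : ℝ≥0∞) ∂μ ≤ ENNReal.ofReal c) :
    1 - ENNReal.ofReal (c / a) ≤ μ {ω | (X ω : ℝ) ≤ a} := by
  have hcompl : {ω | (X ω : ℝ) ≤ a} = {ω | a < X ω}ᶜ := by ext; simp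
  have hmeas : MeasurableSet {ω | a < X ω} := hX (.of_discrete (s := {k : ℕ | a < k}))
  rw [hcompl, prob_compl_eq_one_sub hmeas, ENNReal.ofReal_div_of_pos ha]
  gcongr
  calc μ {ω | a < X ω} ≤ μ {ω | ENNReal.ofReal a ≤ X ω} := measure_mono fun ω hω =>
        (ENNReal.ofReal_le_ofReal (le_of_lt hω)).trans_eq (ENNReal.ofReal_natCast _)
    _ ≤ (∫⁻ ω, (X ω : ℝ≥0∞) ∂μ) / ENNReal.ofReal a :=
        meas_ge_le_lintegral_div (by fun_prop) (by simpa using ha) ENNReal.ofReal_ne_top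
    _ ≤ ENNReal.ofReal c / ENNReal.ofReal a := by gcongr

end FirstMoment

def nonTreeBallVertices {n : ℕ} (ω : Sym2 (Fin n) → Bool) : Set (Fin n) :=
  {v | ¬ ((graphOfFn ω).induce (ball (graphOfFn ω) v 2)).IsTree}

theorem lintegral_ncard_nonTreeBallVertices_le (n : ℕ) (p : ℝ≥0) :
    ∫⁻ ω, ((nonTreeBallVertices ω).ncard : ℝ≥0∞) ∂erMeasure n p
      ≤ (n * p) ^ 3 + 2 * (n * p) ^ 4 + (n * p) ^ 5 := by
  unfold nonTreeBallVertices
  rw [lintegral_ncard_setOf_eq_sum _ fun _ => .of_discrete]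
  calc ∑ v : Fin n,
        erMeasure n p {ω | ¬ ((graphOfFn ω).induce (ball (graphOfFn ω) v 2)).IsTree}
      ≤ ∑ _ : Fin n, ((n : ℝ≥0∞) ^ 2 * p ^ 3 + 2 * (n ^ 3 * p ^ 4) + n ^ 4 * p ^ 5) :=
        Finset.sum_le_sum fun v _ => erMeasure_not_isTree_induce_ball_le n p v
    _ = (n * p) ^ 3 + 2 * (n * p) ^ 4 + (n * p) ^ 5 := by simp; ring

theorem lintegral_ncard_nonTreeBallVertices_le_ofReal {n : ℕ} {p : ℝ≥0} {L : ℝ}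
    (hL : 1 ≤ L) (hnp : (n : ℝ) * p ≤ L ^ 2) :
    ∫⁻ ω, ((nonTreeBallVertices ω).ncard : ℝ≥0∞) ∂erMeasure n p
      ≤ ENNReal.ofReal (4 * L ^ 10) := by
  set y : ℝ := n * p
  have hy : 0 ≤ y := by positivity
  have hpoly : y ^ 3 + 2 * y ^ 4 + y ^ 5 ≤ 4 * L ^ 10 := by
    have h6 : L ^ 6 ≤ L ^ 10 := pow_le_pow_right₀ hL (by norm_num)
    have h8 : L ^ 8 ≤ L ^ 10 := pow_le_pow_right₀ hL (by norm_num)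
    calc y ^ 3 + 2 * y ^ 4 + y ^ 5 ≤ (L ^ 2) ^ 3 + 2 * (L ^ 2) ^ 4 + (L ^ 2) ^ 5 := by gcongr
      _ ≤ 4 * L ^ 10 := by ring_nf; linarith
  have hofReal : (n : ℝ≥0∞) * p = ENNReal.ofReal y := by
    rw [ENNReal.ofReal_mul (by positivity), ENNReal.ofReal_natCast, ENNReal.ofReal_coe_nnreal]
  refine (lintegral_ncard_nonTreeBallVertices_le n p).trans (le_of_eq_of_le ?_
    (ENNReal.ofReal_le_ofReal hpoly))
  rw [ENNReal.ofReal_add (by positivity) (by positivity),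
    ENNReal.ofReal_add (by positivity) (by positivity), ENNReal.ofReal_mul zero_le_two,
    ENNReal.ofReal_pow hy, ENNReal.ofReal_pow hy, ENNReal.ofReal_pow hy, ← hofReal]
  norm_num

theorem few_non_tree_two_neighborhoods_general
    (p : ℕ → ℝ≥0)
    (hub : ∀ n : ℕ, (n : ℝ) * (p n : ℝ) ≤ (Real.log n) ^ 2) :
    Tendsto
      (fun n => erMeasure n (p n)
        {ω | ({v : Fin n |
            ¬ ((graphOfFn ω).induce (ball (graphOfFn ω) v 2)).IsTree}.ncard : ℝ)
          ≤ (Real.log n) ^ 15})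
      atTop (nhds 1) := by
  have hlog : Tendsto (fun n : ℕ => Real.log n) atTop atTop :=
    Real.tendsto_log_atTop.comp tendsto_natCast_atTop_atTop
  have hlower :
      Tendsto (fun n : ℕ => 1 - ENNReal.ofReal (4 / Real.log n ^ 5)) atTop (nhds 1) := by
    have h : Tendsto (fun n : ℕ => 4 / Real.log n ^ 5) atTop (nhds 0) :=
      ((tendsto_pow_atTop (by norm_num : 5 ≠ 0)).comp hlog).const_div_atTop 4
    simpa using ENNReal.Tendsto.sub tendsto_const_nhds (ENNReal.tendsto_ofReal h)
      (.inl ENNReal.one_ne_top)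
  refine tendsto_of_tendsto_of_tendsto_of_le_of_le' hlower tendsto_const_nhds ?_
    (.of_forall fun _ => prob_le_one)
  filter_upwards [hlog.eventually_ge_atTop 1] with n hL
  calc 1 - ENNReal.ofReal (4 / Real.log n ^ 5)
      = 1 - ENNReal.ofReal (4 * Real.log n ^ 10 / Real.log n ^ 15) := by
        congr 2; field_simp
    _ ≤ _ := one_sub_ofReal_div_le_measure_le (measurable_of_countable _) (by positivity)
        (lintegral_ncard_nonTreeBallVertices_le_ofReal hL (hub n))

/-- Let `G ~ G(n, pₙ)` with `n pₙ ≤ log²(n)`. Then with high probability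
at most `log^{15}(n)` vertices of `G` have a 2-neighborhood that is not a tree. -/
theorem few_non_tree_two_neighborhoods
    (p : ℕ → ℝ≥0) (hp1 : ∀ n, p n ≤ 1)
    (hub : ∀ n : ℕ, (n : ℝ) * (p n : ℝ) ≤ (Real.log n) ^ 2) :
    Tendsto
      (fun n => erMeasure n (p n)
        {ω | ({v : Fin n |
            ¬ ((graphOfFn ω).induce (ball (graphOfFn ω) v 2)).IsTree}.ncard : ℝ)
          ≤ (Real.log n) ^ 15})
      atTop (nhds 1) :=
  few_non_tree_two_neighborhoods_general p hub
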